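/- There exists a symmetric complex matrix H of order 36 (indexed by Fin 6 × Fin 6), H = Hᵀ, such that every entry of H has modulus 1 and the rescaled matrices H/6, H^R/6 and H^Γ/6 are all unitary. That is, there exists a symmetric 2-unitary complex Hadamard matrix of order 36. -/

import Mathlib

open Matrix Complex BigOperators

noncomputable section

/-- Reshuffling: `X^R_{(j,k),(l,m)} = X_{(j,l),(k,m)}`. -/
def reshuffle {d : ℕ} (X : Matrix (Fin d × Fin d) (Fin d × Fin d) ℂ) :
    Matrix (Fin d × Fin d) (Fin d × Fin d) ℂ :=
  fun p q => X (p.1, q.1) (p.2, q.2)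

/-- Partial transpose: `X^Γ_{(j,k),(l,m)} = X_{(j,m),(l,k)}`. -/
def ptranspose {d : ℕ} (X : Matrix (Fin d × Fin d) (Fin d × Fin d) ℂ) :
    Matrix (Fin d × Fin d) (Fin d × Fin d) ℂ :=
  fun p q => X (p.1, q.2) (q.1, p.2)

def IsUnitary {n : Type*} [Fintype n] [DecidableEq n] (M : Matrix n n ℂ) : Prop :=
  M ∈ Matrix.unitaryGroup n ℂ

namespace CHM36

abbrev I6 : Type := Fin 6 × Fin 6

/-- Packed table of exponents (1296 values in {0,…,5}, 3 bits each). -/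
def Ntab : ℕ := 170179199050528555941741347192470914278171762329041539735214505728243446573663828864467218399234759111891509332351962300537437608297029669340759715013032747445394286374523699679939701568012901987296305852846827625117019762954216314921542320907112152203601139545721854642607802858055549752563461557558400501777879111257826411636977344882580933509498204395841760425529678503374492361678132245639295110301858227084147041320896549271297714855776545237871710580923849198682368153020742114154846007447678837766762263919084082710113015538717600733457170413186272905805680960347764031749551664539342567059732136156714088742273394348597462200265025136387491451917006156831206833351658753921348367866226368196916849102535500403730963565909744252530757594393310413563680343041875849841907587358628981471124212738976389146165821409354490934362185201604463821443511969221437921859300456821010913783002386341917214568373240916105840644652899487195979088785926386285015613465323744061644581221029648696522838918508995282665389740502849115048408659948421022197036497399850307763369900700567622401766250954436208175751451660649930481208787164073937501111256480489670127397885822668999208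

/-- Exponent of the matrix entry `H (p) (q)` as a power of `ω = e^{iπ/3}`. -/
def fN (p q : I6) : ℕ :=
  (Ntab >>> (3*(((p.1.val*6+p.2.val)*6+q.1.val)*6+q.2.val))) &&& 7

def fR (p q : I6) : ℕ := fN (p.1, q.1) (p.2, q.2)
def fG (p q : I6) : ℕ := fN (p.1, q.2) (q.1, p.2)

/-- `ω = e^{iπ/3}`, a primitive sixth root of unity. -/
def ω : ℂ := Complex.exp ((Real.pi/3 : ℝ) * Complex.I)

/-- Integer coordinates of `ω^n` in the basis `(1, ω)` of `ℤ[ω]`. -/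
def νN (n : ℕ) : ℤ × ℤ :=
  match n % 6 with
  | 0 => (1,0) | 1 => (0,1) | 2 => (-1,1) | 3 => (-1,0) | 4 => (0,-1) | _ => (1,-1)

lemma abs_ω : ‖ω‖ = 1 := by
  rw [ω, Complex.norm_exp]
  simp

lemma ω_ne : ω ≠ 0 := Complex.exp_ne_zero _

lemma ω6 : ω ^ 6 = 1 := by
  rw [ω, ← Complex.exp_nat_mul]
  have h : (6:ℕ) * ((Real.pi/3 : ℝ) * Complex.I) = 2 * (Real.pi : ℂ) * Complex.I := by
    push_cast
    ring
  rw [h, Complex.exp_two_pi_mul_I]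

lemma ω3 : ω ^ 3 = -1 := by
  rw [ω, ← Complex.exp_nat_mul]
  have h : (3:ℕ) * ((Real.pi/3 : ℝ) * Complex.I) = (Real.pi : ℂ) * Complex.I := by
    push_cast
    ring
  rw [h, Complex.exp_pi_mul_I]

lemma ω_re : ω.re = 1/2 := by
  rw [ω, Complex.exp_ofReal_mul_I_re]
  exact Real.cos_pi_div_three

lemma ωsq : ω ^ 2 = ω - 1 := by
  have hne : ω + 1 ≠ 0 := by
    intro h
    have h2 := congrArg Complex.re h
    simp [Complex.add_re, ω_re] at h2
    norm_num at h2
  have hf : (ω + 1) * (ω ^ 2 - ω + 1) = 0 := by linear_combination ω3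
  have h0 := (mul_eq_zero.mp hf).resolve_left hne
  linear_combination h0

lemma ωconj : star ω = ω ^ 5 := by
  have h1 : ω * star ω = 1 := by
    rw [Complex.star_def, Complex.mul_conj]
    rw [Complex.normSq_eq_norm_sq, abs_ω]
    norm_num
  have h2 : ω * ω ^ 5 = 1 := by
    have : ω * ω ^ 5 = ω ^ 6 := by ring
    rw [this, ω6]
  exact mul_left_cancel₀ ω_ne (h1.trans h2.symm)

/-- The additive map `ℤ × ℤ → ℂ`, `(a,b) ↦ a + bω`. -/
def φ : ℤ × ℤ →+ ℂ :=
  AddMonoidHom.mk' (fun z => (z.1 : ℂ) + (z.2 : ℂ) * ω) (by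
    intro a b
    simp only [Prod.fst_add, Prod.snd_add]
    push_cast
    ring)

lemma φ_apply (z : ℤ × ℤ) : φ z = (z.1 : ℂ) + (z.2 : ℂ) * ω := rfl

lemma ωpow (n : ℕ) : ω ^ n = φ (νN n) := by
  have hred : ω ^ n = ω ^ (n % 6) := by
    conv_lhs => rw [← Nat.div_add_mod n 6]
    rw [pow_add, pow_mul, ω6, one_pow, one_mul]
  have hν : νN n = νN (n % 6) := by
    unfold νN
    rw [Nat.mod_mod_of_dvd _ (dvd_refl 6)]
  rw [hred, hν]
  have h : n % 6 < 6 := Nat.mod_lt _ (by norm_num)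
  set m := n % 6 with hm
  clear_value m
  interval_cases m
  · show ω ^ 0 = φ (1,0)
    rw [φ_apply]; norm_num
  · show ω ^ 1 = φ (0,1)
    rw [φ_apply]; norm_num
  · show ω ^ 2 = φ (-1,1)
    rw [φ_apply]; push_cast; linear_combination ωsq
  · show ω ^ 3 = φ (-1,0)
    rw [φ_apply]; push_cast; linear_combination ω3
  · show ω ^ 4 = φ (0,-1)
    rw [φ_apply]; push_cast; linear_combination ω * ω3
  · show ω ^ 5 = φ (1,-1)
    rw [φ_apply]; push_cast; linear_combination (ω^2) * ω3 - ωsq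

/-- Generic Gram computation for matrices of the form `ω^(e p q)`. -/
lemma gram_eq (e : I6 → I6 → ℕ)
    (hdec : ∀ p q : I6, (∑ r : I6, νN (e p r + 5 * e q r))
      = if p = q then ((36:ℤ),(0:ℤ)) else 0) :
    (Matrix.of fun p q => ω ^ e p q) * (Matrix.of fun p q => ω ^ e p q)ᴴ
      = (36:ℂ) • 1 := by
  ext p q
  rw [Matrix.mul_apply]
  have hterm : ∀ r : I6,
      (Matrix.of fun p q => ω ^ e p q) p r
        * (Matrix.of fun p q => ω ^ e p q)ᴴ r q
      = φ (νN (e p r + 5 * e q r)) := by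
    intro r
    rw [Matrix.conjTranspose_apply, Matrix.of_apply, Matrix.of_apply,
      star_pow, ωconj, ← pow_mul, ← pow_add]
    exact ωpow _
  rw [Finset.sum_congr rfl (fun r _ => hterm r), ← map_sum, hdec p q]
  by_cases h : p = q
  · simp only [h, if_pos rfl, Matrix.smul_apply, Matrix.one_apply_eq, smul_eq_mul, mul_one]
    rw [φ_apply]
    norm_num
  · rw [if_neg h, map_zero, Matrix.smul_apply, Matrix.one_apply_ne h]
    simp

lemma star_sixth : star ((1:ℂ)/6) = (1:ℂ)/6 := by
  simp

lemma unit_of (e : I6 → I6 → ℕ)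
    (hdec : ∀ p q : I6, (∑ r : I6, νN (e p r + 5 * e q r))
      = if p = q then ((36:ℤ),(0:ℤ)) else 0) :
    IsUnitary ((1/6 : ℂ) • (Matrix.of fun p q => ω ^ e p q)) := by
  show _ ∈ Matrix.unitaryGroup _ _
  rw [Matrix.mem_unitaryGroup_iff]
  set M : Matrix I6 I6 ℂ := Matrix.of fun p q => ω ^ e p q with hM
  rw [Matrix.star_eq_conjTranspose, Matrix.conjTranspose_smul,
    Matrix.smul_mul, Matrix.mul_smul, gram_eq e hdec]
  rw [smul_smul, smul_smul]
  have : star ((1:ℂ)/6) = (1:ℂ)/6 := star_sixth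
  rw [this]
  have hc : ((1:ℂ)/6 * (1/6) * 36) = 1 := by norm_num
  rw [hc, one_smul]

set_option maxHeartbeats 1000000 in
lemma fN_symm : ∀ p q : I6, fN p q = fN q p := by decide

set_option maxHeartbeats 0 in
set_option maxRecDepth 100000 in
lemma decH : ∀ p q : I6, (∑ r : I6, νN (fN p r + 5 * fN q r))
    = if p = q then ((36:ℤ),(0:ℤ)) else 0 := by decide

set_option maxHeartbeats 0 in
set_option maxRecDepth 100000 in
lemma decR : ∀ p q : I6, (∑ r : I6, νN (fR p r + 5 * fR q r))
    = if p = q then ((36:ℤ),(0:ℤ)) else 0 := by decide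

set_option maxHeartbeats 0 in
set_option maxRecDepth 100000 in
lemma decG : ∀ p q : I6, (∑ r : I6, νN (fG p r + 5 * fG q r))
    = if p = q then ((36:ℤ),(0:ℤ)) else 0 := by decide

end CHM36

open CHM36 in
/-- There exists a symmetric 2-unitary complex Hadamard matrix of order 36. -/
theorem exists_symmetric_two_unitary_CHM_36 :
    ∃ H : Matrix (Fin 6 × Fin 6) (Fin 6 × Fin 6) ℂ,
      H = Hᵀ ∧
      (∀ p q, ‖H p q‖ = 1) ∧
      IsUnitary ((1 / 6 : ℂ) • H) ∧
      IsUnitary ((1 / 6 : ℂ) • reshuffle H) ∧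
      IsUnitary ((1 / 6 : ℂ) • ptranspose H) := by
  refine ⟨Matrix.of fun p q => ω ^ fN p q, ?_, ?_, ?_, ?_, ?_⟩
  · ext p q
    rw [Matrix.transpose_apply, Matrix.of_apply, Matrix.of_apply, fN_symm p q]
  · intro p q
    rw [Matrix.of_apply, norm_pow, abs_ω, one_pow]
  · exact unit_of fN decH
  · exact unit_of fR decR
  · exact unit_of fG decG
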